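/- Let K be a compact metric space equipped with its Borel σ-algebra, and let k : K × K → ℝ be a continuous symmetric positive semidefinite kernel that is characteristic. Then for every Borel probability measure Q on K, Q is the unique minimiser of the expected-score functional P ↦ ∫ φ_k(P, y) dQ(y) over the set of all Borel probability measures P on K: for every Borel probability measure P ≠ Q one has ∫ φ_k(Q, y) dQ(y) < ∫ φ_k(P, y) dQ(y). -/

import Mathlib

open MeasureTheory Set

/-- The kernel score `φ_k(P, y) = ∫∫ k(x,x') dP dP − 2 ∫ k(x,y) dP`. -/
noncomputable def kernelScore {K : Type*} [MeasurableSpace K] (k : K → K → ℝ)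
    (P : Measure K) (y : K) : ℝ :=
  (∫ x, (∫ x', k x x' ∂P) ∂P) - 2 * ∫ x, k x y ∂P

/-- The squared maximum mean discrepancy
`D_k(P,Q)² = ∫∫ k dP⊗P − 2 ∫∫ k dP⊗Q + ∫∫ k dQ⊗Q`. -/
noncomputable def mmdSq {K : Type*} [MeasurableSpace K] (k : K → K → ℝ)
    (P Q : Measure K) : ℝ :=
  (∫ x, (∫ x', k x x' ∂P) ∂P) - 2 * (∫ x, (∫ y, k x y ∂Q) ∂P)
    + (∫ x, (∫ x', k x x' ∂Q) ∂Q)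

section Aux

variable {K : Type*} [MetricSpace K] [CompactSpace K] [MeasurableSpace K] [BorelSpace K]

lemma mmdSq_nonneg {k : K → K → ℝ} (hk_cont : Continuous fun p : K × K => k p.1 p.2)
    (hk_symm : ∀ x y, k x y = k y x)
    (hk_psd : ∀ (n : ℕ) (x : Fin n → K) (c : Fin n → ℝ),
      0 ≤ ∑ i, ∑ j, c i * c j * k (x i) (x j))
    (P Q : Measure K) [IsProbabilityMeasure P] [IsProbabilityMeasure Q] :
    0 ≤ mmdSq k P Q := by
  classical
  obtain ⟨C, hC⟩ : ∃ C, ∀ p ∈ (univ : Set (K × K)), ‖k p.1 p.2‖ ≤ C :=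
    isCompact_univ.exists_bound_of_continuousOn hk_cont.continuousOn
  have hCk : ∀ x y : K, ‖k x y‖ ≤ C := fun x y => hC (x, y) (mem_univ _)
  -- it suffices to prove mmdSq ≥ -4ε for all ε > 0
  suffices h : ∀ ε : ℝ, 0 < ε → -(4 * ε) ≤ mmdSq k P Q by
    by_contra hlt
    push_neg at hlt
    have := h (-(mmdSq k P Q) / 8) (by linarith)
    linarith
  intro ε hε
  -- uniform continuity
  obtain ⟨δ, hδ, hδk⟩ := Metric.uniformContinuous_iff.mp
    (CompactSpace.uniformContinuous_of_continuous hk_cont) ε hε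
  -- finite cover by balls of radius δ/2
  obtain ⟨t, ht⟩ := isCompact_univ.elim_finite_subcover
    (fun x : K => Metric.ball x (δ/2)) (fun _ => Metric.isOpen_ball)
    (fun x _ => mem_iUnion.2 ⟨x, Metric.mem_ball_self (by positivity)⟩)
  set n := t.card with hn
  set z : Fin n → K := fun i => (t.equivFin.symm i : K) with hz
  have hcov : ∀ x : K, ∃ i : Fin n, x ∈ Metric.ball (z i) (δ/2) := by
    intro x
    obtain ⟨y, hy, hxy⟩ := mem_iUnion₂.1 (ht (mem_univ x))
    exact ⟨t.equivFin ⟨y, hy⟩, by simpa [hz] using hxy⟩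
  set A : Fin n → Set K := fun i =>
    Metric.ball (z i) (δ/2) \ ⋃ (j : Fin n) (_ : j < i), Metric.ball (z j) (δ/2) with hA
  have hA_meas : ∀ i, MeasurableSet (A i) := fun i =>
    measurableSet_ball.diff (MeasurableSet.iUnion fun j =>
      MeasurableSet.iUnion fun _ => measurableSet_ball)
  have hA_sub : ∀ i, A i ⊆ Metric.ball (z i) (δ/2) := fun i => diff_subset
  have hA_uniq : ∀ (x : K) (i j : Fin n), x ∈ A i → x ∈ A j → i = j := by
    intro x i j hi hj
    by_contra hij
    rcases lt_or_gt_of_ne hij with h | h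
    · exact hj.2 (mem_iUnion₂.2 ⟨i, h, hi.1⟩)
    · exact hi.2 (mem_iUnion₂.2 ⟨j, h, hj.1⟩)
  have hA_cover : ∀ x : K, ∃ i, x ∈ A i := by
    intro x
    obtain ⟨i, hi⟩ := hcov x
    have hne : (Finset.univ.filter fun i => x ∈ Metric.ball (z i) (δ/2)).Nonempty :=
      ⟨i, by simpa using hi⟩
    set i₀ := (Finset.univ.filter fun i => x ∈ Metric.ball (z i) (δ/2)).min' hne with hi₀
    have hmem : x ∈ Metric.ball (z i₀) (δ/2) := by
      have := Finset.min'_mem _ hne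
      simpa [hi₀] using this
    refine ⟨i₀, hmem, ?_⟩
    intro hx
    obtain ⟨j, hj, hxj⟩ := mem_iUnion₂.1 hx
    have : i₀ ≤ j := Finset.min'_le _ _ (by simpa using hxj)
    exact absurd hj (not_lt.2 this)
  -- the index map
  set ι : K → Fin n := fun x => Classical.choose (hA_cover x) with hι_def
  have hι : ∀ x, x ∈ A (ι x) := fun x => Classical.choose_spec (hA_cover x)
  -- pointwise approximation
  have hptw : ∀ x y : K, ‖k x y - k (z (ι x)) (z (ι y))‖ ≤ ε := by
    intro x y
    have hx : dist x (z (ι x)) < δ/2 := hA_sub _ (hι x)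
    have hy : dist y (z (ι y)) < δ/2 := hA_sub _ (hι y)
    have hd : dist ((x, y) : K × K) (z (ι x), z (ι y)) < δ := by
      rw [Prod.dist_eq]
      exact max_lt (by linarith) (by linarith)
    have := hδk hd
    rw [Real.dist_eq] at this
    exact le_of_lt this
  -- pointwise: a function of ι is a finite sum of indicators
  have hpt : ∀ (w : Fin n → ℝ) (y : K),
      w (ι y) = ∑ j, (A j).indicator (fun _ => w j) y := by
    intro w y
    rw [Finset.sum_eq_single (ι y)]
    · rw [indicator_of_mem (hι y)]
    · intro j _ hj
      refine indicator_of_notMem (fun hyj => hj ?_) _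
      exact hA_uniq y j (ι y) hyj (hι y)
    · simp
  -- integral of a step function composed with ι
  have hstep : ∀ (ν : Measure K) (_ : IsProbabilityMeasure ν) (w : Fin n → ℝ),
      ∫ y, w (ι y) ∂ν = ∑ j, (ν (A j)).toReal * w j := by
    intro ν hν w
    calc ∫ y, w (ι y) ∂ν = ∫ y, ∑ j, (A j).indicator (fun _ => w j) y ∂ν := by
            simp_rw [hpt w]
      _ = ∑ j, ∫ y, (A j).indicator (fun _ => w j) y ∂ν := by
            refine integral_finset_sum _ fun j _ => ?_
            exact (integrable_const (w j)).indicator (hA_meas j)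
      _ = ∑ j, (ν (A j)).toReal * w j := by
            refine Finset.sum_congr rfl fun j _ => ?_
            rw [integral_indicator_const _ (hA_meas j), smul_eq_mul]; rfl
  -- the discrete bilinear form
  set S : Measure K → Measure K → ℝ := fun μ ν =>
    ∑ i, ∑ j, (μ (A i)).toReal * (ν (A j)).toReal * k (z i) (z j) with hS
  -- the approximated double integral equals S
  have hgint : ∀ (μ ν : Measure K) (_ : IsProbabilityMeasure μ) (_ : IsProbabilityMeasure ν),
      ∫ x, ∫ y, k (z (ι x)) (z (ι y)) ∂ν ∂μ = S μ ν := by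
    intro μ ν hμ hν
    have hinner : ∀ x : K, ∫ y, k (z (ι x)) (z (ι y)) ∂ν
        = ∑ j, (ν (A j)).toReal * k (z (ι x)) (z j) := by
      intro x
      have h := hstep ν hν (fun j => k (z (ι x)) (z j))
      simpa using h
    calc ∫ x, ∫ y, k (z (ι x)) (z (ι y)) ∂ν ∂μ
        = ∫ x, ∑ j, (ν (A j)).toReal * k (z (ι x)) (z j) ∂μ := by simp_rw [hinner]
      _ = ∑ i, (μ (A i)).toReal * ∑ j, (ν (A j)).toReal * k (z i) (z j) :=
          hstep μ hμ (fun i => ∑ j, (ν (A j)).toReal * k (z i) (z j))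
      _ = S μ ν := by
          simp_rw [hS, Finset.mul_sum]
          exact Finset.sum_congr rfl fun i _ => Finset.sum_congr rfl fun j _ => by ring
  -- integrability facts
  have hk_x : ∀ x : K, Continuous fun y => k x y := fun x =>
    hk_cont.comp (Continuous.prodMk_right x)
  have hk_y : ∀ y : K, Continuous fun x => k x y := fun y =>
    hk_cont.comp (continuous_id.prodMk continuous_const)
  have hint_k : ∀ (x : K) (ν : Measure K), IsProbabilityMeasure ν →
      Integrable (fun y => k x y) ν := by
    intro x ν hν
    exact (integrable_const C).mono' (hk_x x).aestronglyMeasurable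
      (ae_of_all _ fun y => hCk x y)
  have hint_g : ∀ (a : K) (ν : Measure K), IsProbabilityMeasure ν →
      Integrable (fun y => k (z (ι a)) (z (ι y))) ν := by
    intro a ν hν
    have hfun : (fun y => k (z (ι a)) (z (ι y)))
        = fun y => ∑ j, (A j).indicator (fun _ => k (z (ι a)) (z j)) y := by
      funext y
      have h := hpt (fun j => k (z (ι a)) (z j)) y
      simpa using h
    rw [hfun]
    exact integrable_finset_sum _ fun j _ => (integrable_const _).indicator (hA_meas j)
  have hcont_int : ∀ (ν : Measure K), IsProbabilityMeasure ν →
      Continuous fun x => ∫ y, k x y ∂ν := by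
    intro ν hν
    apply continuous_of_dominated (bound := fun _ => C)
    · exact fun x => (hk_x x).aestronglyMeasurable
    · exact fun x => ae_of_all _ fun y => hCk x y
    · exact integrable_const _
    · exact ae_of_all _ fun y => hk_y y
  -- the double-integral approximation bound
  have happrox : ∀ (μ ν : Measure K) (_ : IsProbabilityMeasure μ) (_ : IsProbabilityMeasure ν),
      ‖(∫ x, ∫ y, k x y ∂ν ∂μ) - S μ ν‖ ≤ ε := by
    intro μ ν hμ hν
    rw [← hgint μ ν hμ hν]
    -- obtain integrability of outer functions
    have hF : Integrable (fun x => ∫ y, k x y ∂ν) μ := by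
      refine (integrable_const C).mono' (hcont_int ν hν).aestronglyMeasurable
        (ae_of_all _ fun x => ?_)
      have := norm_integral_le_of_norm_le_const (μ := ν) (f := fun y => k x y)
        (ae_of_all _ fun y => hCk x y)
      simpa [measure_univ] using this
    have hG : Integrable (fun x => ∫ y, k (z (ι x)) (z (ι y)) ∂ν) μ := by
      have hfun : (fun x => ∫ y, k (z (ι x)) (z (ι y)) ∂ν)
          = fun x => ∑ j, (ν (A j)).toReal * k (z (ι x)) (z j) := by
        funext x
        have h := hstep ν hν (fun j => k (z (ι x)) (z j))
        simpa using h
      rw [hfun]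
      have hfun2 : (fun x => ∑ j, (ν (A j)).toReal * k (z (ι x)) (z j))
          = fun x => ∑ i, (A i).indicator
              (fun _ => ∑ j, (ν (A j)).toReal * k (z i) (z j)) x := by
        funext x
        have h := hpt (fun i => ∑ j, (ν (A j)).toReal * k (z i) (z j)) x
        simpa using h
      rw [hfun2]
      exact integrable_finset_sum _ fun i _ => (integrable_const _).indicator (hA_meas i)
    rw [← integral_sub hF hG]
    have hbound : ∀ x : K, ‖(∫ y, k x y ∂ν) - ∫ y, k (z (ι x)) (z (ι y)) ∂ν‖ ≤ ε := by
      intro x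
      rw [← integral_sub (hint_k x ν hν) (hint_g x ν hν)]
      have := norm_integral_le_of_norm_le_const (μ := ν)
        (f := fun y => k x y - k (z (ι x)) (z (ι y)))
        (ae_of_all _ fun y => hptw x y)
      simpa [measure_univ] using this
    have := norm_integral_le_of_norm_le_const (μ := μ)
      (f := fun x => (∫ y, k x y ∂ν) - ∫ y, k (z (ι x)) (z (ι y)) ∂ν)
      (ae_of_all _ hbound)
    simpa [measure_univ] using this
  -- the discrete form is PSD
  set c : Fin n → ℝ := fun i => (P (A i)).toReal - (Q (A i)).toReal with hc
  have hT : 0 ≤ ∑ i, ∑ j, c i * c j * k (z i) (z j) := hk_psd n z c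
  have hexpand : ∑ i, ∑ j, c i * c j * k (z i) (z j)
      = S P P - S P Q - S Q P + S Q Q := by
    simp only [hS, hc]
    rw [← Finset.sum_sub_distrib, ← Finset.sum_sub_distrib, ← Finset.sum_add_distrib]
    refine Finset.sum_congr rfl fun i _ => ?_
    rw [← Finset.sum_sub_distrib, ← Finset.sum_sub_distrib, ← Finset.sum_add_distrib]
    exact Finset.sum_congr rfl fun j _ => by ring
  have hsymmS : S Q P = S P Q := by
    simp only [hS]
    rw [Finset.sum_comm]
    exact Finset.sum_congr rfl fun i _ => Finset.sum_congr rfl fun j _ => by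
      rw [hk_symm (z j) (z i)]; ring
  -- put everything together
  have h1 := happrox P P inferInstance inferInstance
  have h2 := happrox P Q inferInstance inferInstance
  have h3 := happrox Q Q inferInstance inferInstance
  rw [Real.norm_eq_abs, abs_le] at h1 h2 h3
  have hT' : 0 ≤ S P P - 2 * S P Q + S Q Q := by
    rw [hexpand, hsymmS] at hT; linarith
  simp only [mmdSq]
  obtain ⟨h1l, h1r⟩ := h1
  obtain ⟨h2l, h2r⟩ := h2
  obtain ⟨h3l, h3r⟩ := h3
  linarith

end Aux

theorem kernelScore_unique_minimiser
    {K : Type*} [MetricSpace K] [CompactSpace K] [MeasurableSpace K] [BorelSpace K]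
    (k : K → K → ℝ) (hk_cont : Continuous fun p : K × K => k p.1 p.2)
    (hk_symm : ∀ x y, k x y = k y x)
    (hk_psd : ∀ (n : ℕ) (x : Fin n → K) (c : Fin n → ℝ),
      0 ≤ ∑ i, ∑ j, c i * c j * k (x i) (x j))
    (hk_char : ∀ (P Q : Measure K), IsProbabilityMeasure P → IsProbabilityMeasure Q →
      mmdSq k P Q = 0 → P = Q)
    (Q : Measure K) [IsProbabilityMeasure Q]
    (P : Measure K) [IsProbabilityMeasure P] (hPQ : P ≠ Q) :
    (∫ y, kernelScore k Q y ∂Q) < ∫ y, kernelScore k P y ∂Q := by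
  obtain ⟨C, hC⟩ : ∃ C, ∀ p ∈ (univ : Set (K × K)), ‖k p.1 p.2‖ ≤ C :=
    isCompact_univ.exists_bound_of_continuousOn hk_cont.continuousOn
  have hCk : ∀ x y : K, ‖k x y‖ ≤ C := fun x y => hC (x, y) (mem_univ _)
  have hk_x : ∀ x : K, Continuous fun y => k x y := fun x =>
    hk_cont.comp (Continuous.prodMk_right x)
  have hk_y : ∀ y : K, Continuous fun x => k x y := fun y =>
    hk_cont.comp (continuous_id.prodMk continuous_const)
  -- continuity and integrability of y ↦ ∫ x, k x y ∂μ
  have hcont : ∀ μ : Measure K, IsProbabilityMeasure μ →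
      Continuous fun y => ∫ x, k x y ∂μ := by
    intro μ hμ
    apply continuous_of_dominated (bound := fun _ => C)
    · exact fun y => (hk_y y).aestronglyMeasurable
    · exact fun y => ae_of_all _ fun x => hCk x y
    · exact integrable_const _
    · exact ae_of_all _ fun x => hk_x x
  have hint : ∀ μ ν : Measure K, IsProbabilityMeasure μ → IsProbabilityMeasure ν →
      Integrable (fun y => ∫ x, k x y ∂μ) ν := by
    intro μ ν hμ hν
    refine (integrable_const C).mono' (hcont μ hμ).aestronglyMeasurable
      (ae_of_all _ fun y => ?_)
    have := norm_integral_le_of_norm_le_const (μ := μ) (f := fun x => k x y)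
      (ae_of_all _ fun x => hCk x y)
    simpa [measure_univ] using this
  -- the score at Q
  have hLHS : ∫ y, kernelScore k Q y ∂Q = -(∫ x, ∫ x', k x x' ∂Q ∂Q) := by
    unfold kernelScore
    rw [integral_sub (integrable_const _) ((hint Q Q inferInstance inferInstance).const_mul 2),
      integral_const, integral_const_mul]
    have hQQ : ∫ y, ∫ x, k x y ∂Q ∂Q = ∫ x, ∫ x', k x x' ∂Q ∂Q := by
      refine integral_congr_ae (ae_of_all _ fun y => ?_)
      exact integral_congr_ae (ae_of_all _ fun x => hk_symm x y)
    rw [hQQ]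
    simp [measure_univ]
    ring
  -- the score at P
  have hRHS : ∫ y, kernelScore k P y ∂Q
      = (∫ x, ∫ x', k x x' ∂P ∂P) - 2 * ∫ y, ∫ x, k x y ∂P ∂Q := by
    unfold kernelScore
    rw [integral_sub (integrable_const _) ((hint P Q inferInstance inferInstance).const_mul 2),
      integral_const, integral_const_mul]
    simp [measure_univ]
  -- Fubini
  have hFub : ∫ x, ∫ y, k x y ∂Q ∂P = ∫ y, ∫ x, k x y ∂P ∂Q := by
    refine integral_integral_swap ?_
    exact (integrable_const C).mono' hk_cont.aestronglyMeasurable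
      (ae_of_all _ fun p => hCk p.1 p.2)
  have hdiff : (∫ y, kernelScore k P y ∂Q) - (∫ y, kernelScore k Q y ∂Q)
      = mmdSq k P Q := by
    rw [hRHS, hLHS, mmdSq, ← hFub]; ring
  have hne : mmdSq k P Q ≠ 0 := fun h =>
    hPQ (hk_char P Q inferInstance inferInstance h)
  have hpos : 0 < mmdSq k P Q :=
    lt_of_le_of_ne (mmdSq_nonneg hk_cont hk_symm hk_psd P Q) (Ne.symm hne)
  linarith
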